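/- Let $1 < p, p_1, p_2 < \infty$ with $1/p = 1/p_1 + 1/p_2$, and let $b_1, b_2 \in L^1_{loc}(\mathbb{R}^n)$. Define the bilinear maximal operator $\mathcal{M}(f_1,f_2)(x) = \sup_{Q \ni x} \prod_{i=1}^2 \frac{1}{|Q|}\int_Q |f_i|$ and the linear commutator $[\Sigma\vec{b},\mathcal{M}](f_1,f_2) = (b_1+b_2)\mathcal{M}(f_1,f_2) - \mathcal{M}(b_1f_1,f_2) - \mathcal{M}(f_1,b_2f_2)$. If $[\Sigma\vec{b},\mathcal{M}]$ is bounded from $L^{p_1}(\mathbb{R}^n) \times L^{p_2}(\mathbb{R}^n)$ to $L^p(\mathbb{R}^n)$ with norm $K$, then for every cube $Q$, $\frac{1}{|Q|}\int_Q |b_1(x) - M_Q(b_1)(x)| \, dx \leq K$ and $\frac{1}{|Q|}\int_Q |b_2(x) - M_Q(b_2)(x)| \, dx \leq K$. -/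

import Mathlib

open MeasureTheory ENNReal

/-- The axis-parallel cube centered at `x` with side length `2 * ρ`. -/
def cube (n : ℕ) (x : Fin n → ℝ) (ρ : ℝ) : Set (Fin n → ℝ) := {y | ∀ i, |y i - x i| ≤ ρ}

/-- The local Hardy–Littlewood maximal function over subcubes of `cube n Qc Qr`. -/
noncomputable def locMax (n : ℕ) (Qc : Fin n → ℝ) (Qr : ℝ) (f : (Fin n → ℝ) → ℝ)
    (x : Fin n → ℝ) : ℝ≥0∞ :=
  ⨆ (c : Fin n → ℝ) (r : ℝ) (_ : 0 < r) (_ : cube n c r ⊆ cube n Qc Qr)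
    (_ : x ∈ cube n c r),
      (volume (cube n c r))⁻¹ * ∫⁻ y in cube n c r, ENNReal.ofReal |f y|

/-- The bilinear maximal operator `ℳ(f₁,f₂)(x) = sup_{Q ∋ x} ∏ᵢ (1/|Q|) ∫_Q |fᵢ|`. -/
noncomputable def biMax (n : ℕ) (f1 f2 : (Fin n → ℝ) → ℝ) (x : Fin n → ℝ) : ℝ≥0∞ :=
  ⨆ (c : Fin n → ℝ) (r : ℝ) (_ : 0 < r) (_ : x ∈ cube n c r),
    ((volume (cube n c r))⁻¹ * ∫⁻ y in cube n c r, ENNReal.ofReal |f1 y|) *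
    ((volume (cube n c r))⁻¹ * ∫⁻ y in cube n c r, ENNReal.ofReal |f2 y|)

/-- The linear commutator `[Σ b⃗, ℳ](f₁,f₂) = (b₁+b₂)ℳ(f₁,f₂) - ℳ(b₁f₁,f₂) - ℳ(f₁,b₂f₂)`. -/
noncomputable def biMaxCommutator (n : ℕ) (b1 b2 f1 f2 : (Fin n → ℝ) → ℝ)
    (x : Fin n → ℝ) : ℝ :=
  (b1 x + b2 x) * (biMax n f1 f2 x).toReal
    - (biMax n (fun y => b1 y * f1 y) f2 x).toReal
    - (biMax n f1 (fun y => b2 y * f2 y) x).toReal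

/-!
Test the commutator on `f₁ = f₂ = χ_Q`. On `Q` one has `ℳ(χ_Q, χ_Q) = 1`, while `ℳ(b₁χ_Q, χ_Q)`
dominates `M_Q b₁`, which by Lebesgue differentiation dominates `b₁` almost everywhere on `Q`
(likewise for `b₂`). So on `Q` the commutator is the sum of the two nonpositive terms
`b₁ - ℳ(b₁χ_Q, χ_Q)` and `b₂ - ℳ(χ_Q, b₂χ_Q)`, and each `|bᵢ - M_Q bᵢ|` is bounded by its absolute
value. Hölder's inequality on `Q` turns the assumed bound
`‖[Σb⃗, ℳ](χ_Q, χ_Q)‖_p ≤ K |Q|^{1/p₁ + 1/p₂} = K |Q|^{1/p}` into the mean oscillation bound.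
The maximal functions involved are finite a.e. (again by Lebesgue differentiation), which is what
makes the passage to real values legitimate.
-/

open Metric Filter Set Topology

section Holder

variable {α : Type*} [MeasurableSpace α] {μ : Measure α}

theorem lintegral_enorm_le_eLpNorm_mul_measure_univ_rpow {E : Type*} [NormedAddCommGroup E]
    (g : α → E) {p q : ℝ} (hpq : p.HolderConjugate q) :
    ∫⁻ a, ‖g a‖ₑ ∂μ ≤ eLpNorm g (ENNReal.ofReal p) μ * μ univ ^ (1 / q) := by
  -- `g` need not be measurable, so pass to a measurable minorant with the same integral.
  obtain ⟨G, hGm, hGle, hG⟩ := exists_measurable_le_lintegral_eq μ fun a => ‖g a‖ₑ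
  have hHolder := ENNReal.lintegral_mul_le_Lp_mul_Lq μ hpq hGm.aemeasurable
    (aemeasurable_const (b := (1 : ℝ≥0∞)))
  simp only [Pi.mul_apply, mul_one, ENNReal.one_rpow, lintegral_const, one_mul] at hHolder
  rw [hG, eLpNorm_eq_lintegral_rpow_enorm_toReal (by simpa using hpq.pos) ofReal_ne_top,
    toReal_ofReal hpq.nonneg]
  refine hHolder.trans ?_
  gcongr ?_ ^ _ * _
  · exact hpq.one_div_nonneg
  · exact lintegral_mono fun a => ENNReal.rpow_le_rpow (hGle a) hpq.nonneg

theorem setAverage_abs_le_of_ae_abs_le {Q : Set α} {e g : α → ℝ} {p q K : ℝ}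
    (hpq : p.HolderConjugate q) (hK : 0 ≤ K) (hQ0 : μ Q ≠ 0) (hQ : μ Q ≠ ⊤)
    (hae : ∀ᵐ x ∂μ.restrict Q, |e x| ≤ |g x|)
    (hg : eLpNorm g (ENNReal.ofReal p) μ ≤ ENNReal.ofReal K * μ Q ^ (1 / p)) :
    ⨍ x in Q, |e x| ∂μ ≤ K := by
  have hlint : ∫⁻ x in Q, ENNReal.ofReal |e x| ∂μ ≤ ENNReal.ofReal K * μ Q :=
    calc ∫⁻ x in Q, ENNReal.ofReal |e x| ∂μ
        ≤ ∫⁻ x in Q, ‖g x‖ₑ ∂μ := lintegral_mono_ae <| hae.mono fun x hx => by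
          rw [Real.enorm_eq_ofReal_abs]; exact ofReal_le_ofReal hx
      _ ≤ eLpNorm g (ENNReal.ofReal p) (μ.restrict Q) * μ.restrict Q univ ^ (1 / q) :=
          lintegral_enorm_le_eLpNorm_mul_measure_univ_rpow g hpq
      _ ≤ ENNReal.ofReal K * μ Q ^ (1 / p) * μ Q ^ (1 / q) := by
          rw [Measure.restrict_apply_univ]
          gcongr
          exact (eLpNorm_mono_measure g Measure.restrict_le_self).trans hg
      _ = ENNReal.ofReal K * μ Q := by
          rw [mul_assoc, ← ENNReal.rpow_add _ _ hQ0 hQ, hpq.one_div_add_one_div,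
            div_self one_ne_zero, ENNReal.rpow_one]
  rw [setAverage_eq, smul_eq_mul]
  have hint : ∫ x in Q, |e x| ∂μ ≤ K * μ.real Q := by
    have h := ENNReal.toReal_mono (mul_ne_top ofReal_ne_top hQ) hlint
    rw [toReal_mul, toReal_ofReal hK, ← measureReal_def] at h
    refine (le_abs_self _).trans ((Real.norm_eq_abs _ ▸ norm_integral_le_lintegral_norm _).trans ?_)
    simpa only [Real.norm_eq_abs, abs_abs] using h
  have hQpos : 0 < μ.real Q := toReal_pos hQ0 hQ
  calc (μ.real Q)⁻¹ * ∫ x in Q, |e x| ∂μ ≤ (μ.real Q)⁻¹ * (K * μ.real Q) := by gcongr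
    _ = K := by field_simp

end Holder

theorem MeasureTheory.LocallyIntegrable.integrable_mul_indicator_one {α : Type*} [MeasurableSpace α]
    [TopologicalSpace α] {μ : Measure α} {b : α → ℝ} (hb : LocallyIntegrable b μ) {s : Set α}
    (hs : IsCompact s) (hsm : MeasurableSet s) :
    Integrable (fun y => b y * s.indicator (fun _ => (1 : ℝ)) y) μ := by
  have heq : (fun y => b y * s.indicator (fun _ => (1 : ℝ)) y) = s.indicator b := by
    ext y
    by_cases hy : y ∈ s <;> simp [hy]
  rw [heq, integrable_indicator_iff hsm]
  exact hb.integrableOn_isCompact hs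

theorem MeasureTheory.LocallyIntegrable.abs {X : Type*} [MeasurableSpace X] [TopologicalSpace X]
    {μ : Measure X} {f : X → ℝ} (hf : LocallyIntegrable f μ) :
    LocallyIntegrable (fun x => |f x|) μ :=
  locallyIntegrableOn_univ.1 (hf.locallyIntegrableOn univ).norm

section Cube

variable {n : ℕ}

theorem cube_eq_closedBall (c : Fin n → ℝ) {r : ℝ} (hr : 0 ≤ r) : cube n c r = closedBall c r := by
  ext y
  simp only [cube, mem_ofPred_eq, mem_closedBall, dist_pi_le_iff hr, Real.dist_eq]

theorem mem_cube_self (c : Fin n → ℝ) {r : ℝ} (hr : 0 ≤ r) : c ∈ cube n c r := by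
  simpa [cube] using fun _ => hr

theorem measurableSet_cube (c : Fin n → ℝ) {r : ℝ} (hr : 0 ≤ r) : MeasurableSet (cube n c r) :=
  cube_eq_closedBall c hr ▸ measurableSet_closedBall

theorem isCompact_cube (c : Fin n → ℝ) {r : ℝ} (hr : 0 ≤ r) : IsCompact (cube n c r) :=
  cube_eq_closedBall c hr ▸ isCompact_closedBall c r

theorem volume_cube (c : Fin n → ℝ) {r : ℝ} (hr : 0 ≤ r) :
    volume (cube n c r) = ENNReal.ofReal ((2 * r) ^ n) := by
  rw [cube_eq_closedBall c hr, Real.volume_pi_closedBall c hr, Fintype.card_fin]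

theorem volume_cube_ne_zero (c : Fin n → ℝ) {r : ℝ} (hr : 0 < r) : volume (cube n c r) ≠ 0 := by
  rw [volume_cube c hr.le, Ne, ENNReal.ofReal_eq_zero, not_le]
  positivity

theorem volume_cube_ne_top (c : Fin n → ℝ) {r : ℝ} (hr : 0 ≤ r) : volume (cube n c r) ≠ ⊤ := by
  rw [volume_cube c hr]
  exact ofReal_ne_top

theorem ball_ae_eq_cube (c : Fin n → ℝ) {r : ℝ} (hr : 0 < r) : ball c r =ᵐ[volume] cube n c r := by
  refine ae_eq_of_subset_of_measure_ge ?_ ?_ measurableSet_ball.nullMeasurableSet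
    (volume_cube_ne_top c hr.le)
  · exact cube_eq_closedBall c hr.le ▸ ball_subset_closedBall
  · rw [volume_cube c hr.le, Real.volume_pi_ball c hr, Fintype.card_fin]

noncomputable def cubeAvg (n : ℕ) (f : (Fin n → ℝ) → ℝ) (c : Fin n → ℝ) (r : ℝ) : ℝ≥0∞ :=
  (volume (cube n c r))⁻¹ * ∫⁻ y in cube n c r, ENNReal.ofReal |f y|

noncomputable def maximalFunction (n : ℕ) (f : (Fin n → ℝ) → ℝ) (x : Fin n → ℝ) : ℝ≥0∞ :=
  ⨆ (c : Fin n → ℝ) (r : ℝ) (_ : 0 < r) (_ : x ∈ cube n c r), cubeAvg n f c r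

theorem biMax_eq_iSup_cubeAvg_mul (f1 f2 : (Fin n → ℝ) → ℝ) (x : Fin n → ℝ) :
    biMax n f1 f2 x =
      ⨆ (c : Fin n → ℝ) (r : ℝ) (_ : 0 < r) (_ : x ∈ cube n c r),
        cubeAvg n f1 c r * cubeAvg n f2 c r :=
  rfl

theorem locMax_eq_iSup_cubeAvg (Qc : Fin n → ℝ) (Qr : ℝ) (f : (Fin n → ℝ) → ℝ) (x : Fin n → ℝ) :
    locMax n Qc Qr f x =
      ⨆ (c : Fin n → ℝ) (r : ℝ) (_ : 0 < r) (_ : cube n c r ⊆ cube n Qc Qr) (_ : x ∈ cube n c r),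
        cubeAvg n f c r :=
  rfl

theorem cubeAvg_le_locMax {f : (Fin n → ℝ) → ℝ} {Qc c x : Fin n → ℝ} {Qr r : ℝ} (hr : 0 < r)
    (hsub : cube n c r ⊆ cube n Qc Qr) (hx : x ∈ cube n c r) :
    cubeAvg n f c r ≤ locMax n Qc Qr f x := by
  rw [locMax_eq_iSup_cubeAvg]
  exact le_iSup₂_of_le c r <| le_iSup₂_of_le hr hsub <| le_iSup_of_le hx le_rfl

theorem cubeAvg_mul_cubeAvg_le_biMax {f1 f2 : (Fin n → ℝ) → ℝ} {c x : Fin n → ℝ} {r : ℝ}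
    (hr : 0 < r) (hx : x ∈ cube n c r) : cubeAvg n f1 c r * cubeAvg n f2 c r ≤ biMax n f1 f2 x := by
  rw [biMax_eq_iSup_cubeAvg_mul]
  exact le_iSup₂_of_le c r <| le_iSup₂_of_le hr hx le_rfl

theorem cubeAvg_eq_ofReal_setAverage {f : (Fin n → ℝ) → ℝ} (c : Fin n → ℝ) {r : ℝ} (hr : 0 < r)
    (hf : IntegrableOn f (cube n c r)) :
    cubeAvg n f c r = ENNReal.ofReal (⨍ y in cube n c r, |f y|) := by
  have h0 := volume_cube_ne_zero c hr
  have htop := volume_cube_ne_top c hr.le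
  rw [cubeAvg, setAverage_eq, smul_eq_mul, measureReal_def,
    ENNReal.ofReal_mul (inv_nonneg.2 toReal_nonneg),
    ofReal_integral_eq_lintegral_ofReal hf.abs (Eventually.of_forall fun y => abs_nonneg _),
    ENNReal.ofReal_inv_of_pos (toReal_pos h0 htop), ofReal_toReal htop]

end Cube

section Differentiation

variable {n : ℕ} {f : (Fin n → ℝ) → ℝ}

theorem ae_maximalFunction_ne_top (hf : Integrable f volume) :
    ∀ᵐ x, maximalFunction n f x ≠ ⊤ := by
  filter_upwards [IsUnifLocDoublingMeasure.ae_tendsto_average volume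
    hf.abs.locallyIntegrable 1] with x hx
  -- Lebesgue differentiation along all small cubes containing `x`, not only centered ones.
  obtain ⟨ε, hε, hsmall⟩ : ∃ ε > 0, ∀ (c : Fin n → ℝ) (r : ℝ), r ∈ Ioo 0 ε →
      x ∈ cube n c r → cubeAvg n f c r ≤ ENNReal.ofReal (|f x| + 1) := by
    have hlim := hx (l := comap Prod.snd (𝓝[>] 0) ⊓ 𝓟 {p | x ∈ closedBall p.1 p.2})
      Prod.fst Prod.snd (tendsto_comap.mono_left inf_le_left)
      (mem_inf_of_right (by simp only [one_mul]; exact fun _ h => h))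
    have hev := hlim.eventually (gt_mem_nhds (lt_add_one |f x|))
    rw [eventually_inf_principal, eventually_comap, (nhdsGT_basis 0).eventually_iff] at hev
    obtain ⟨ε, hε, hbound⟩ := hev
    refine ⟨ε, hε, fun c r hr hxc => ?_⟩
    rw [cubeAvg_eq_ofReal_setAverage c hr.1 hf.integrableOn, cube_eq_closedBall c hr.1.le]
    rw [cube_eq_closedBall c hr.1.le] at hxc
    exact ofReal_le_ofReal (hbound hr (c, r) rfl hxc).le
  have hlarge : ∀ (c : Fin n → ℝ) (r : ℝ), ε ≤ r →
      cubeAvg n f c r ≤ (ENNReal.ofReal ((2 * ε) ^ n))⁻¹ * ∫⁻ y, ENNReal.ofReal |f y| := by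
    intro c r hr
    rw [cubeAvg, volume_cube c (hε.le.trans hr)]
    exact mul_le_mul' (ENNReal.inv_le_inv.2 (ofReal_le_ofReal (by gcongr)))
      (setLIntegral_le_lintegral _ _)
  have hbound_ne_top : max (ENNReal.ofReal (|f x| + 1))
      ((ENNReal.ofReal ((2 * ε) ^ n))⁻¹ * ∫⁻ y, ENNReal.ofReal |f y|) ≠ ⊤ := by
    refine max_ne_top ofReal_ne_top (mul_ne_top ?_ hf.abs.lintegral_lt_top.ne)
    rw [Ne, inv_eq_top, ENNReal.ofReal_eq_zero, not_le]
    positivity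
  refine ne_top_of_le_ne_top hbound_ne_top (iSup₂_le fun c r => iSup₂_le fun hr hxc => ?_)
  rcases lt_or_ge r ε with hrε | hεr
  · exact (hsmall c r ⟨hr, hrε⟩ hxc).trans (le_max_left _ _)
  · exact (hlarge c r hεr).trans (le_max_right _ _)

theorem ae_ofReal_abs_le_locMax (hf : LocallyIntegrable f volume) (c : Fin n → ℝ) {r : ℝ}
    (hr : 0 < r) : ∀ᵐ x ∂volume.restrict (cube n c r), ENNReal.ofReal |f x| ≤ locMax n c r f x := by
  have hball : ∀ᵐ x ∂volume.restrict (cube n c r), x ∈ ball c r := by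
    rw [← Measure.restrict_congr_set (ball_ae_eq_cube c hr)]
    exact ae_restrict_mem measurableSet_ball
  filter_upwards [hball, ae_restrict_of_ae (IsUnifLocDoublingMeasure.ae_tendsto_average volume
    hf.abs 1)] with x hxc hx
  have hlim := hx (l := 𝓝[>] 0) (fun _ => x) id tendsto_id
    (eventually_nhdsWithin_of_forall fun δ hδ => by simpa using le_of_lt hδ)
  refine le_of_tendsto (ENNReal.tendsto_ofReal hlim) ?_
  have hsmall : ∀ᶠ δ in 𝓝[>] (0 : ℝ), δ < r - dist x c :=
    nhdsWithin_le_nhds (gt_mem_nhds (sub_pos.2 (mem_ball.1 hxc)))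
  filter_upwards [self_mem_nhdsWithin, hsmall] with δ (hδ : 0 < δ) hδr
  have hsub : cube n x δ ⊆ cube n c r := by
    rw [cube_eq_closedBall x hδ.le, cube_eq_closedBall c hr.le]
    exact closedBall_subset_closedBall' (by linarith)
  rw [id, ← cube_eq_closedBall x hδ.le,
    ← cubeAvg_eq_ofReal_setAverage x hδ (hf.integrableOn_isCompact (isCompact_cube x hδ.le))]
  exact cubeAvg_le_locMax hδ hsub (mem_cube_self x hδ.le)

end Differentiation

section TestFunction

variable {n : ℕ}

theorem cubeAvg_indicator_one_le (Q : Set (Fin n → ℝ)) (c : Fin n → ℝ) {r : ℝ} (hr : 0 < r) :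
    cubeAvg n (Q.indicator fun _ => 1) c r ≤ 1 := by
  have hle : ∫⁻ y in cube n c r, ENNReal.ofReal |Q.indicator (fun _ => (1 : ℝ)) y|
      ≤ volume (cube n c r) := by
    rw [← setLIntegral_one]
    exact lintegral_mono fun y => by by_cases hy : y ∈ Q <;> simp [hy]
  calc cubeAvg n (Q.indicator fun _ => 1) c r ≤ (volume (cube n c r))⁻¹ * volume (cube n c r) :=
        mul_le_mul_right hle _
    _ = 1 := ENNReal.inv_mul_cancel (volume_cube_ne_zero c hr) (volume_cube_ne_top c hr.le)

theorem cubeAvg_indicator_one_of_subset {Q : Set (Fin n → ℝ)} {c : Fin n → ℝ} {r : ℝ}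
    (hr : 0 < r) (hsub : cube n c r ⊆ Q) : cubeAvg n (Q.indicator fun _ => 1) c r = 1 := by
  rw [cubeAvg, setLIntegral_congr_fun (measurableSet_cube c hr.le) (g := fun _ => 1)
    fun y hy => by simp [hsub hy], setLIntegral_one,
    ENNReal.inv_mul_cancel (volume_cube_ne_zero c hr) (volume_cube_ne_top c hr.le)]

theorem cubeAvg_mul_indicator_one_of_subset {Q : Set (Fin n → ℝ)} (f : (Fin n → ℝ) → ℝ)
    {c : Fin n → ℝ} {r : ℝ} (hr : 0 ≤ r) (hsub : cube n c r ⊆ Q) :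
    cubeAvg n (fun y => f y * Q.indicator (fun _ => 1) y) c r = cubeAvg n f c r := by
  rw [cubeAvg, cubeAvg, setLIntegral_congr_fun (measurableSet_cube c hr)
    (g := fun y => ENNReal.ofReal |f y|) fun y hy => by simp [hsub hy]]

theorem biMax_le_maximalFunction_left {f g : (Fin n → ℝ) → ℝ}
    (hg : ∀ c r, 0 < r → cubeAvg n g c r ≤ 1) (x : Fin n → ℝ) :
    biMax n f g x ≤ maximalFunction n f x := by
  rw [biMax_eq_iSup_cubeAvg_mul]
  exact iSup₂_mono fun c r => iSup₂_mono fun hr _ => mul_le_of_le_one_right' (hg c r hr)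

theorem biMax_le_maximalFunction_right {f g : (Fin n → ℝ) → ℝ}
    (hf : ∀ c r, 0 < r → cubeAvg n f c r ≤ 1) (x : Fin n → ℝ) :
    biMax n f g x ≤ maximalFunction n g x := by
  rw [biMax_eq_iSup_cubeAvg_mul]
  exact iSup₂_mono fun c r => iSup₂_mono fun hr _ => mul_le_of_le_one_left' (hf c r hr)

theorem biMax_indicator_one_cube {c x : Fin n → ℝ} {r : ℝ} (hr : 0 < r) (hx : x ∈ cube n c r) :
    biMax n ((cube n c r).indicator fun _ => 1) ((cube n c r).indicator fun _ => 1) x = 1 := by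
  refine le_antisymm ?_ ?_
  · rw [biMax_eq_iSup_cubeAvg_mul]
    refine iSup₂_le fun c' r' => iSup₂_le fun hr' _ => ?_
    exact mul_le_one' (cubeAvg_indicator_one_le _ c' hr') (cubeAvg_indicator_one_le _ c' hr')
  · calc (1 : ℝ≥0∞) = 1 * 1 := (mul_one 1).symm
      _ ≤ _ := by
        rw [← cubeAvg_indicator_one_of_subset hr subset_rfl]
        exact cubeAvg_mul_cubeAvg_le_biMax hr hx

theorem locMax_le_biMax_mul_indicator_one_left (b : (Fin n → ℝ) → ℝ) (c x : Fin n → ℝ) (r : ℝ) :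
    locMax n c r b x ≤ biMax n (fun y => b y * (cube n c r).indicator (fun _ => 1) y)
      ((cube n c r).indicator fun _ => 1) x := by
  rw [locMax_eq_iSup_cubeAvg]
  refine iSup₂_le fun c' r' => iSup₂_le fun hr' hsub => iSup_le fun hx => ?_
  calc cubeAvg n b c' r'
      = cubeAvg n (fun y => b y * (cube n c r).indicator (fun _ => 1) y) c' r' *
          cubeAvg n ((cube n c r).indicator fun _ => 1) c' r' := by
        rw [cubeAvg_mul_indicator_one_of_subset b hr'.le hsub,
          cubeAvg_indicator_one_of_subset hr' hsub, mul_one]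
    _ ≤ _ := cubeAvg_mul_cubeAvg_le_biMax hr' hx

theorem locMax_le_biMax_mul_indicator_one_right (b : (Fin n → ℝ) → ℝ) (c x : Fin n → ℝ) (r : ℝ) :
    locMax n c r b x ≤ biMax n ((cube n c r).indicator fun _ => 1)
      (fun y => b y * (cube n c r).indicator (fun _ => 1) y) x := by
  rw [locMax_eq_iSup_cubeAvg]
  refine iSup₂_le fun c' r' => iSup₂_le fun hr' hsub => iSup_le fun hx => ?_
  calc cubeAvg n b c' r'
      = cubeAvg n ((cube n c r).indicator fun _ => 1) c' r' *
          cubeAvg n (fun y => b y * (cube n c r).indicator (fun _ => 1) y) c' r' := by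
        rw [cubeAvg_mul_indicator_one_of_subset b hr'.le hsub,
          cubeAvg_indicator_one_of_subset hr' hsub, one_mul]
    _ ≤ _ := cubeAvg_mul_cubeAvg_le_biMax hr' hx

end TestFunction

theorem abs_sub_le_abs_add_sub_sub {b₁ b₂ L₁ M₁ M₂ : ℝ} (h₁ : b₁ ≤ L₁) (hL₁ : L₁ ≤ M₁)
    (h₂ : b₂ ≤ M₂) : |b₁ - L₁| ≤ |b₁ + b₂ - M₁ - M₂| := by
  rw [abs_of_nonpos (by linarith), abs_of_nonpos (by linarith)]
  linarith

theorem ae_abs_sub_locMax_le_abs_biMaxCommutator {n : ℕ} {b1 b2 : (Fin n → ℝ) → ℝ}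
    (hb1 : LocallyIntegrable b1 volume) (hb2 : LocallyIntegrable b2 volume) (c : Fin n → ℝ)
    {r : ℝ} (hr : 0 < r) :
    ∀ᵐ x ∂volume.restrict (cube n c r),
      |b1 x - (locMax n c r b1 x).toReal| ≤
        |biMaxCommutator n b1 b2 ((cube n c r).indicator fun _ => 1)
          ((cube n c r).indicator fun _ => 1) x| ∧
      |b2 x - (locMax n c r b2 x).toReal| ≤
        |biMaxCommutator n b1 b2 ((cube n c r).indicator fun _ => 1)
          ((cube n c r).indicator fun _ => 1) x| := by
  set χ : (Fin n → ℝ) → ℝ := (cube n c r).indicator fun _ => 1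
  have hχ : ∀ c' r', 0 < r' → cubeAvg n χ c' r' ≤ 1 := fun c' _ hr' =>
    cubeAvg_indicator_one_le _ c' hr'
  have hM1 : ∀ᵐ x, biMax n (fun y => b1 y * χ y) χ x ≠ ⊤ :=
    (ae_maximalFunction_ne_top (hb1.integrable_mul_indicator_one (isCompact_cube c hr.le)
      (measurableSet_cube c hr.le))).mono fun x hx =>
        ne_top_of_le_ne_top hx (biMax_le_maximalFunction_left hχ x)
  have hM2 : ∀ᵐ x, biMax n χ (fun y => b2 y * χ y) x ≠ ⊤ :=
    (ae_maximalFunction_ne_top (hb2.integrable_mul_indicator_one (isCompact_cube c hr.le)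
      (measurableSet_cube c hr.le))).mono fun x hx =>
        ne_top_of_le_ne_top hx (biMax_le_maximalFunction_right hχ x)
  filter_upwards [ae_restrict_mem (measurableSet_cube c hr.le), ae_restrict_of_ae hM1,
    ae_restrict_of_ae hM2, ae_ofReal_abs_le_locMax hb1 c hr, ae_ofReal_abs_le_locMax hb2 c hr]
    with x hx hM1 hM2 hb1x hb2x
  have hL1 := locMax_le_biMax_mul_indicator_one_left b1 c x r
  have hL2 := locMax_le_biMax_mul_indicator_one_right b2 c x r
  have hb1L : b1 x ≤ (locMax n c r b1 x).toReal :=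
    (le_abs_self _).trans ((ofReal_le_iff_le_toReal (ne_top_of_le_ne_top hM1 hL1)).1 hb1x)
  have hb2L : b2 x ≤ (locMax n c r b2 x).toReal :=
    (le_abs_self _).trans ((ofReal_le_iff_le_toReal (ne_top_of_le_ne_top hM2 hL2)).1 hb2x)
  rw [biMaxCommutator, biMax_indicator_one_cube hr hx, toReal_one, mul_one]
  constructor
  · exact abs_sub_le_abs_add_sub_sub hb1L (toReal_mono hM1 hL1)
      (hb2L.trans (toReal_mono hM2 hL2))
  · rw [add_comm, sub_right_comm]
    exact abs_sub_le_abs_add_sub_sub hb2L (toReal_mono hM2 hL2)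
      (hb1L.trans (toReal_mono hM1 hL1))

theorem biMax_commutator_necessity (n : ℕ) (p p1 p2 : ℝ)
    (hp : 1 < p) (hp1 : 1 < p1) (hp2 : 1 < p2) (hsum : 1 / p = 1 / p1 + 1 / p2)
    (b1 b2 : (Fin n → ℝ) → ℝ)
    (hb1 : LocallyIntegrable b1 volume) (hb2 : LocallyIntegrable b2 volume)
    (K : ℝ) (hK : 0 ≤ K)
    (hbound : ∀ f1 f2 : (Fin n → ℝ) → ℝ,
      MemLp f1 (ENNReal.ofReal p1) volume → MemLp f2 (ENNReal.ofReal p2) volume →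
      eLpNorm (biMaxCommutator n b1 b2 f1 f2) (ENNReal.ofReal p) volume
        ≤ ENNReal.ofReal K * eLpNorm f1 (ENNReal.ofReal p1) volume
            * eLpNorm f2 (ENNReal.ofReal p2) volume) :
    ∀ c r, 0 < r →
      (⨍ x in cube n c r, (abs (b1 x - (locMax n c r b1 x).toReal)) ≤ K) ∧
      (⨍ x in cube n c r, (abs (b2 x - (locMax n c r b2 x).toReal)) ≤ K) := by
  intro c r hr
  set Q := cube n c r
  have hQm : MeasurableSet Q := measurableSet_cube c hr.le
  have hQ0 : volume Q ≠ 0 := volume_cube_ne_zero c hr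
  have hQ : volume Q ≠ ⊤ := volume_cube_ne_top c hr.le
  have hχ : ∀ s : ℝ, 0 < s → eLpNorm (Q.indicator fun _ => (1 : ℝ)) (ENNReal.ofReal s) volume =
      volume Q ^ (1 / s) := fun s hs => by
    rw [eLpNorm_indicator_const hQm (by simpa using hs) ofReal_ne_top, toReal_ofReal hs.le]
    simp
  have hg := hbound _ _ (memLp_indicator_const _ hQm 1 (Or.inr hQ))
    (memLp_indicator_const _ hQm 1 (Or.inr hQ))
  rw [hχ p1 (by linarith), hχ p2 (by linarith), mul_assoc, ← ENNReal.rpow_add _ _ hQ0 hQ,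
    ← hsum] at hg
  have hpt := ae_abs_sub_locMax_le_abs_biMaxCommutator hb1 hb2 c hr
  have hpq := Real.HolderConjugate.conjExponent hp
  exact ⟨setAverage_abs_le_of_ae_abs_le hpq hK hQ0 hQ (hpt.mono fun _ h => h.1) hg,
    setAverage_abs_le_of_ae_abs_le hpq hK hQ0 hQ (hpt.mono fun _ h => h.2) hg⟩
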